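/- arXiv:math/0510568 — 2 statements merged into one kernel-verified Lean document; each statement's English description precedes it below -/
import Mathlib

section
/- Let c be the unique positive real number with ∫₀^c (e^x − 1)/x dx = 1, and set P* = e^{−c} + (e^{c} − c − 1)·∫₁^∞ e^{−cx}/x dx. Then 0.580 < P* < 0.581. -/
open MeasureTheory Real Set intervalIntegral


lemma expCl_lo : ((22352431183323/10000000000000):ℝ) ≤ Real.exp ((16087/20000)) := by
  have h := Real.sum_le_exp_of_nonneg (x := ((16087/20000):ℝ)) (by norm_num) 12
  have hs : (∑ m ∈ Finset.range 12, ((16087/20000):ℝ) ^ m / m.factorial) = ((18273024513198003283493347803943666776298013637314693863/8174960640000000000000000000000000000000000000000000000):ℝ) := by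
    simp only [Finset.sum_range_succ]
    norm_num [Nat.factorial]
  linarith [h, hs.ge, hs.le]

lemma expCl_hi : Real.exp ((16087/20000)) ≤ ((22352431184983/10000000000000):ℝ) := by
  have h := Real.exp_bound' (x := ((16087/20000):ℝ)) (by norm_num) (by norm_num) (n := 12) (by norm_num)
  have hs : ((∑ m ∈ Finset.range 12, ((16087/20000):ℝ) ^ m / m.factorial) +
      ((16087/20000):ℝ) ^ 12 * (12 + 1) / (Nat.factorial 12 * 12)) = ((7518044371702208110173977511153881695323182846819102274217579/3363412377600000000000000000000000000000000000000000000000000):ℝ) := by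
    simp only [Finset.sum_range_succ]
    norm_num [Nat.factorial]
  linarith [h, hs.le, hs.ge]

lemma expCl_neg_lo : ((1118446570447/2500000000000):ℝ) ≤ Real.exp (-((16087/20000):ℝ)) := by
  have hprod : Real.exp (-((16087/20000):ℝ)) * Real.exp ((16087/20000):ℝ) = 1 := by
    rw [← Real.exp_add]; norm_num
  nlinarith [expCl_lo, expCl_hi, Real.exp_pos (-((16087/20000):ℝ)), Real.exp_pos ((16087/20000):ℝ)]

lemma expCl_neg_hi : Real.exp (-((16087/20000):ℝ)) ≤ ((4473786282121/10000000000000):ℝ) := by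
  have hprod : Real.exp (-((16087/20000):ℝ)) * Real.exp ((16087/20000):ℝ) = 1 := by
    rw [← Real.exp_add]; norm_num
  nlinarith [expCl_lo, expCl_hi, Real.exp_pos (-((16087/20000):ℝ)), Real.exp_pos ((16087/20000):ℝ)]


lemma expCh_lo : ((11176271472879/5000000000000):ℝ) ≤ Real.exp ((160871/200000)) := by
  have h := Real.sum_le_exp_of_nonneg (x := ((160871/200000):ℝ)) (by norm_num) 12
  have hs : (∑ m ∈ Finset.range 12, ((160871/200000):ℝ) ^ m / m.factorial) = ((1827311587854888908969747808646114387640849474136727682479463294071/817496064000000000000000000000000000000000000000000000000000000000):ℝ) := by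
    simp only [Finset.sum_range_succ]
    norm_num [Nat.factorial]
  linarith [h, hs.ge, hs.le]

lemma expCh_hi : Real.exp ((160871/200000)) ≤ ((11176271473709/5000000000000):ℝ) := by
  have h := Real.exp_bound' (x := ((160871/200000):ℝ)) (by norm_num) (by norm_num) (n := 12) (by norm_num)
  have hs : ((∑ m ∈ Finset.range 12, ((160871/200000):ℝ) ^ m / m.factorial) +
      ((160871/200000):ℝ) ^ 12 * (12 + 1) / (Nat.factorial 12 * 12)) = ((52626573734126299209614589741070412903471863512706198896068920993360645933/23543886643200000000000000000000000000000000000000000000000000000000000000):ℝ) := by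
    simp only [Finset.sum_range_succ]
    norm_num [Nat.factorial]
  linarith [h, hs.le, hs.ge]

lemma expCh_neg_lo : ((4473763912913/10000000000000):ℝ) ≤ Real.exp (-((160871/200000):ℝ)) := by
  have hprod : Real.exp (-((160871/200000):ℝ)) * Real.exp ((160871/200000):ℝ) = 1 := by
    rw [← Real.exp_add]; norm_num
  nlinarith [expCh_lo, expCh_hi, Real.exp_pos (-((160871/200000):ℝ)), Real.exp_pos ((160871/200000):ℝ)]

lemma expCh_neg_hi : Real.exp (-((160871/200000):ℝ)) ≤ ((2236881956623/5000000000000):ℝ) := by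
  have hprod : Real.exp (-((160871/200000):ℝ)) * Real.exp ((160871/200000):ℝ) = 1 := by
    rw [← Real.exp_add]; norm_num
  nlinarith [expCh_lo, expCh_hi, Real.exp_pos (-((160871/200000):ℝ)), Real.exp_pos ((160871/200000):ℝ)]


lemma en1_lo : ((3678794411523/10000000000000):ℝ) ≤ Real.exp (-(1:ℝ)) := by
  have hprod : Real.exp (-(1:ℝ)) * Real.exp 1 = 1 := by rw [← Real.exp_add]; norm_num
  nlinarith [Real.exp_one_gt_d9, Real.exp_one_lt_d9, Real.exp_pos (-(1:ℝ)), Real.exp_pos 1]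

lemma en1_hi : Real.exp (-(1:ℝ)) ≤ ((367879441193/1000000000000):ℝ) := by
  have hprod : Real.exp (-(1:ℝ)) * Real.exp 1 = 1 := by rw [← Real.exp_add]; norm_num
  nlinarith [Real.exp_one_gt_d9, Real.exp_one_lt_d9, Real.exp_pos (-(1:ℝ)), Real.exp_pos 1]


lemma en2_lo : ((54134113289/400000000000):ℝ) ≤ Real.exp (-(2:ℝ)) := by
  have hprod : Real.exp (-(2:ℝ)) = Real.exp (-(1:ℝ)) * Real.exp (-(1:ℝ)) := by
    rw [← Real.exp_add]; norm_num
  nlinarith [en1_lo, en1_hi, Real.exp_pos (-(1:ℝ))]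

lemma en2_hi : Real.exp (-(2:ℝ)) ≤ ((54134113301/400000000000):ℝ) := by
  have hprod : Real.exp (-(2:ℝ)) = Real.exp (-(1:ℝ)) * Real.exp (-(1:ℝ)) := by
    rw [← Real.exp_add]; norm_num
  nlinarith [en1_lo, en1_hi, Real.exp_pos (-(1:ℝ))]


lemma en4_lo : ((183156388849/10000000000000):ℝ) ≤ Real.exp (-(4:ℝ)) := by
  have hprod : Real.exp (-(4:ℝ)) = Real.exp (-(2:ℝ)) * Real.exp (-(2:ℝ)) := by
    rw [← Real.exp_add]; norm_num
  nlinarith [en2_lo, en2_hi, Real.exp_pos (-(2:ℝ))]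

lemma en4_hi : Real.exp (-(4:ℝ)) ≤ ((183156388931/10000000000000):ℝ) := by
  have hprod : Real.exp (-(4:ℝ)) = Real.exp (-(2:ℝ)) * Real.exp (-(2:ℝ)) := by
    rw [← Real.exp_add]; norm_num
  nlinarith [en2_lo, en2_hi, Real.exp_pos (-(2:ℝ))]


lemma en8_lo : ((3354626277/10000000000000):ℝ) ≤ Real.exp (-(8:ℝ)) := by
  have hprod : Real.exp (-(8:ℝ)) = Real.exp (-(4:ℝ)) * Real.exp (-(4:ℝ)) := by
    rw [← Real.exp_add]; norm_num
  nlinarith [en4_lo, en4_hi, Real.exp_pos (-(4:ℝ))]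

lemma en8_hi : Real.exp (-(8:ℝ)) ≤ ((3354626281/10000000000000):ℝ) := by
  have hprod : Real.exp (-(8:ℝ)) = Real.exp (-(4:ℝ)) * Real.exp (-(4:ℝ)) := by
    rw [← Real.exp_add]; norm_num
  nlinarith [en4_lo, en4_hi, Real.exp_pos (-(4:ℝ))]


lemma intPl : ∫ x in (0:ℝ)..(160871/200000), (((1):ℝ) + (1/2) * x ^ 1 + (1/6) * x ^ 2 + (1/24) * x ^ 3 + (1/120) * x ^ 4 + (1/720) * x ^ 5 + (1/5040) * x ^ 6 + (1/40320) * x ^ 7) = ((17340897685233748789156663943172922252171799111381/17340825600000000000000000000000000000000000000000):ℝ) := by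
  have key : ∀ x ∈ Set.uIcc (0:ℝ) (160871/200000), HasDerivAt (fun x : ℝ => (((0):ℝ) + (1) * x ^ 1 + (1/4) * x ^ 2 + (1/18) * x ^ 3 + (1/96) * x ^ 4 + (1/600) * x ^ 5 + (1/4320) * x ^ 6 + (1/35280) * x ^ 7 + (1/322560) * x ^ 8)) (((1):ℝ) + (1/2) * x ^ 1 + (1/6) * x ^ 2 + (1/24) * x ^ 3 + (1/120) * x ^ 4 + (1/720) * x ^ 5 + (1/5040) * x ^ 6 + (1/40320) * x ^ 7) x := by
    intro x _
    have hQ := (((((((((hasDerivAt_const x (((0):ℝ))).add ((hasDerivAt_pow 1 x).const_mul (((1):ℝ)))).add ((hasDerivAt_pow 2 x).const_mul (((1/4):ℝ)))).add ((hasDerivAt_pow 3 x).const_mul (((1/18):ℝ)))).add ((hasDerivAt_pow 4 x).const_mul (((1/96):ℝ)))).add ((hasDerivAt_pow 5 x).const_mul (((1/600):ℝ)))).add ((hasDerivAt_pow 6 x).const_mul (((1/4320):ℝ)))).add ((hasDerivAt_pow 7 x).const_mul (((1/35280):ℝ)))).add ((hasDerivAt_pow 8 x).const_mul (((1/322560)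:ℝ))))
    refine hQ.congr_deriv ?_
    ring
  rw [intervalIntegral.integral_eq_sub_of_hasDerivAt key
    ((by fun_prop : Continuous fun x : ℝ => (((1):ℝ) + (1/2) * x ^ 1 + (1/6) * x ^ 2 + (1/24) * x ^ 3 + (1/120) * x ^ 4 + (1/720) * x ^ 5 + (1/5040) * x ^ 6 + (1/40320) * x ^ 7)).intervalIntegrable _ _)]
  norm_num


lemma intPh : ∫ x in (0:ℝ)..(16087/20000), (((1):ℝ) + (1/2) * x ^ 1 + (1/6) * x ^ 2 + (1/24) * x ^ 3 + (1/120) * x ^ 4 + (1/720) * x ^ 5 + (1/5040) * x ^ 6 + (1/40320) * x ^ 7 + (1/326592) * x ^ 8) = ((10534514959049242471970327137914597903130290439/10534551552000000000000000000000000000000000000):ℝ) := by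
  have key : ∀ x ∈ Set.uIcc (0:ℝ) (16087/20000), HasDerivAt (fun x : ℝ => (((0):ℝ) + (1) * x ^ 1 + (1/4) * x ^ 2 + (1/18) * x ^ 3 + (1/96) * x ^ 4 + (1/600) * x ^ 5 + (1/4320) * x ^ 6 + (1/35280) * x ^ 7 + (1/322560) * x ^ 8 + (1/2939328) * x ^ 9)) (((1):ℝ) + (1/2) * x ^ 1 + (1/6) * x ^ 2 + (1/24) * x ^ 3 + (1/120) * x ^ 4 + (1/720) * x ^ 5 + (1/5040) * x ^ 6 + (1/40320) * x ^ 7 + (1/326592) * x ^ 8) x := by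
    intro x _
    have hQ := ((((((((((hasDerivAt_const x (((0):ℝ))).add ((hasDerivAt_pow 1 x).const_mul (((1):ℝ)))).add ((hasDerivAt_pow 2 x).const_mul (((1/4):ℝ)))).add ((hasDerivAt_pow 3 x).const_mul (((1/18):ℝ)))).add ((hasDerivAt_pow 4 x).const_mul (((1/96):ℝ)))).add ((hasDerivAt_pow 5 x).const_mul (((1/600):ℝ)))).add ((hasDerivAt_pow 6 x).const_mul (((1/4320):ℝ)))).add ((hasDerivAt_pow 7 x).const_mul (((1/35280):ℝ)))).add ((hasDerivAt_pow 8 x).const_mul (((1/322560):ℝ)))).add ((hasDerivAt_pow 9 x).const_mul (((1/2939328):ℝ))))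
    refine hQ.congr_deriv ?_
    ring
  rw [intervalIntegral.integral_eq_sub_of_hasDerivAt key
    ((by fun_prop : Continuous fun x : ℝ => (((1):ℝ) + (1/2) * x ^ 1 + (1/6) * x ^ 2 + (1/24) * x ^ 3 + (1/120) * x ^ 4 + (1/720) * x ^ 5 + (1/5040) * x ^ 6 + (1/40320) * x ^ 7 + (1/326592) * x ^ 8)).intervalIntegrable _ _)]
  norm_num


lemma ptPl : ∀ x ∈ Set.Ioc (0:ℝ) (160871/200000), (((1):ℝ) + (1/2) * x ^ 1 + (1/6) * x ^ 2 + (1/24) * x ^ 3 + (1/120) * x ^ 4 + (1/720) * x ^ 5 + (1/5040) * x ^ 6 + (1/40320) * x ^ 7) ≤ (Real.exp x - 1) / x := by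
  intro x hx
  have hx1 : (0:ℝ) < x := hx.1
  have hx2 : x ≤ ((160871/200000):ℝ) := hx.2
  have hs := Real.sum_le_exp_of_nonneg (x := x) hx1.le 9
  have hsum : (∑ m ∈ Finset.range 9, x ^ m / m.factorial) = 1 + x * (((1):ℝ) + (1/2) * x ^ 1 + (1/6) * x ^ 2 + (1/24) * x ^ 3 + (1/120) * x ^ 4 + (1/720) * x ^ 5 + (1/5040) * x ^ 6 + (1/40320) * x ^ 7) := by
    simp only [Finset.sum_range_succ]
    norm_num [Nat.factorial]
    ring
  rw [le_div_iff₀ hx1]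
  nlinarith [hs, hsum.le, hsum.ge]

lemma ptPh : ∀ x ∈ Set.Ioc (0:ℝ) (16087/20000), (Real.exp x - 1) / x ≤ (((1):ℝ) + (1/2) * x ^ 1 + (1/6) * x ^ 2 + (1/24) * x ^ 3 + (1/120) * x ^ 4 + (1/720) * x ^ 5 + (1/5040) * x ^ 6 + (1/40320) * x ^ 7 + (1/326592) * x ^ 8) := by
  intro x hx
  have hx1 : (0:ℝ) < x := hx.1
  have hx2 : x ≤ ((16087/20000):ℝ) := hx.2
  have hs := Real.exp_bound' (x := x) hx1.le (by linarith : x ≤ 1) (n := 9) (by norm_num)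
  have hsum : ((∑ m ∈ Finset.range 9, x ^ m / m.factorial) + x ^ 9 * (9 + 1) / (Nat.factorial 9 * 9))
      = 1 + x * (((1):ℝ) + (1/2) * x ^ 1 + (1/6) * x ^ 2 + (1/24) * x ^ 3 + (1/120) * x ^ 4 + (1/720) * x ^ 5 + (1/5040) * x ^ 6 + (1/40320) * x ^ 7 + (1/326592) * x ^ 8) := by
    simp only [Finset.sum_range_succ]
    norm_num [Nat.factorial]
    ring
  rw [div_le_iff₀ hx1]
  nlinarith [hs, hsum.le, hsum.ge]

lemma f_integrableOn {t : ℝ} (ht : 0 < t) :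
    IntegrableOn (fun x => (Real.exp x - 1) / x) (Set.Ioc 0 t) := by
  apply Integrable.mono' (integrable_const (Real.exp t))
  · exact ((Real.measurable_exp.sub measurable_const).div measurable_id).aestronglyMeasurable
  · filter_upwards [ae_restrict_mem measurableSet_Ioc] with x hx
    have hx1 : (0:ℝ) < x := hx.1
    have hx2 : x ≤ t := hx.2
    have hnn : 0 ≤ (Real.exp x - 1) / x := by
      apply div_nonneg _ hx1.le
      linarith [Real.add_one_le_exp x]
    rw [Real.norm_eq_abs, abs_of_nonneg hnn]
    have h1 : (Real.exp x - 1) / x ≤ Real.exp x := by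
      rw [div_le_iff₀ hx1]
      have hprod : Real.exp (-x) * Real.exp x = 1 := by rw [← Real.exp_add]; simp
      nlinarith [mul_le_mul_of_nonneg_right (Real.add_one_le_exp (-x)) (Real.exp_pos x).le,
        hprod, Real.exp_pos x]
    have h2 : Real.exp x ≤ Real.exp t := Real.exp_le_exp.2 hx2
    linarith

lemma f_nonnegOn {t : ℝ} : ∀ x ∈ Set.Ioc (0:ℝ) t, 0 ≤ (Real.exp x - 1) / x := by
  intro x hx
  have := hx.1
  apply div_nonneg _ hx.1.le
  linarith [Real.add_one_le_exp x]

lemma gIntOn {a b : ℝ} (ha : 0 < a) (hab : a ≤ b) :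
    IntervalIntegrable (fun u => Real.exp (-u) / u) volume a b := by
  apply ContinuousOn.intervalIntegrable
  apply ContinuousOn.div (Real.continuous_exp.comp continuous_neg).continuousOn continuousOn_id
  intro x hx
  rw [Set.uIcc_of_le hab] at hx
  exact ne_of_gt (lt_of_lt_of_le ha hx.1)



lemma intLow_A_lo : ∫ u in ((160871/200000):ℝ)..(1), Real.exp (-u) * (((20/3):ℝ) + (-500/27) * u ^ 1 + (20000/729) * u ^ 2 + (-50000/2187) * u ^ 3 + (200000/19683) * u ^ 4 + (-1000000/531441) * u ^ 5) =
    Real.exp (-((160871/200000):ℝ)) * ((-29606055275560151066955673351/170061120000000000000000000)) - Real.exp (-((1):ℝ)) * ((-112640060/531441)) := by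
  have key : ∀ u ∈ Set.uIcc ((160871/200000):ℝ) (1), HasDerivAt
      (fun u : ℝ => -(Real.exp (-u) * (((-13479520/177147):ℝ) + (-14660500/177147) * u ^ 1 + (-5690000/177147) * u ^ 2 + (-10550000/531441) * u ^ 3 + (400000/531441) * u ^ 4 + (-1000000/531441) * u ^ 5)))
      (Real.exp (-u) * (((20/3):ℝ) + (-500/27) * u ^ 1 + (20000/729) * u ^ 2 + (-50000/2187) * u ^ 3 + (200000/19683) * u ^ 4 + (-1000000/531441) * u ^ 5)) u := by
    intro u _
    have hexp : HasDerivAt (fun u : ℝ => Real.exp (-u)) (-Real.exp (-u)) u := by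
      simpa [Function.comp_def] using (Real.hasDerivAt_exp (-u)).comp u (hasDerivAt_neg u)
    have hQ := ((((((hasDerivAt_const u (((-13479520/177147):ℝ))).add ((hasDerivAt_pow 1 u).const_mul (((-14660500/177147):ℝ)))).add ((hasDerivAt_pow 2 u).const_mul (((-5690000/177147):ℝ)))).add ((hasDerivAt_pow 3 u).const_mul (((-10550000/531441):ℝ)))).add ((hasDerivAt_pow 4 u).const_mul (((400000/531441):ℝ)))).add ((hasDerivAt_pow 5 u).const_mul (((-1000000/531441):ℝ))))
    have := (hexp.mul hQ).neg
    refine this.congr_deriv ?_; simp only [Pi.add_apply]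
    ring
  rw [intervalIntegral.integral_eq_sub_of_hasDerivAt key
    ((by fun_prop : Continuous fun u : ℝ => Real.exp (-u) * (((20/3):ℝ) + (-500/27) * u ^ 1 + (20000/729) * u ^ 2 + (-50000/2187) * u ^ 3 + (200000/19683) * u ^ 4 + (-1000000/531441) * u ^ 5)).intervalIntegrable _ _)]
  norm_num
  try ring


lemma ptLow_A_lo : ∀ u ∈ Set.Icc ((160871/200000):ℝ) (1), Real.exp (-u) * (((20/3):ℝ) + (-500/27) * u ^ 1 + (20000/729) * u ^ 2 + (-50000/2187) * u ^ 3 + (200000/19683) * u ^ 4 + (-1000000/531441) * u ^ 5) ≤ Real.exp (-u) / u := by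
  intro u hu
  have h1 : ((160871/200000):ℝ) ≤ u := hu.1
  have h2 : u ≤ ((1):ℝ) := hu.2
  have hupos : (0:ℝ) < u := by norm_num at h1 ⊢; linarith
  have hE := Real.exp_pos (-u)
  have hq : (((20/3):ℝ) + (-500/27) * u ^ 1 + (20000/729) * u ^ 2 + (-50000/2187) * u ^ 3 + (200000/19683) * u ^ 4 + (-1000000/531441) * u ^ 5) ≤ 1 / u := by
    rw [le_div_iff₀ hupos]
    nlinarith [sq_nonneg (((u - (9/10))/(9/10)) ^ 3), sq_nonneg u]
  calc Real.exp (-u) * (((20/3):ℝ) + (-500/27) * u ^ 1 + (20000/729) * u ^ 2 + (-50000/2187) * u ^ 3 + (200000/19683) * u ^ 4 + (-1000000/531441) * u ^ 5) ≤ Real.exp (-u) * (1/u) := by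
        exact mul_le_mul_of_nonneg_left hq hE.le
    _ = Real.exp (-u) / u := by ring


lemma intHigh_A_hi : ∫ u in ((16087/20000):ℝ)..(1), Real.exp (-u) * (((56995295780/8549291367):ℝ) + (-500/27) * u ^ 1 + (20000/729) * u ^ 2 + (-50000/2187) * u ^ 3 + (200000/19683) * u ^ 4 + (-1000000/531441) * u ^ 5) =
    Real.exp (-((16087/20000):ℝ)) * ((-1587567354849471103552139003/9119244124800000000000000)) - Real.exp (-((1):ℝ)) * ((-604013541740/2849763789)) := by
  have key : ∀ u ∈ Set.uIcc ((16087/20000):ℝ) (1), HasDerivAt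
      (fun u : ℝ => -(Real.exp (-u) * (((-650535094720/8549291367):ℝ) + (-14660500/177147) * u ^ 1 + (-5690000/177147) * u ^ 2 + (-10550000/531441) * u ^ 3 + (400000/531441) * u ^ 4 + (-1000000/531441) * u ^ 5)))
      (Real.exp (-u) * (((56995295780/8549291367):ℝ) + (-500/27) * u ^ 1 + (20000/729) * u ^ 2 + (-50000/2187) * u ^ 3 + (200000/19683) * u ^ 4 + (-1000000/531441) * u ^ 5)) u := by
    intro u _
    have hexp : HasDerivAt (fun u : ℝ => Real.exp (-u)) (-Real.exp (-u)) u := by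
      simpa [Function.comp_def] using (Real.hasDerivAt_exp (-u)).comp u (hasDerivAt_neg u)
    have hQ := ((((((hasDerivAt_const u (((-650535094720/8549291367):ℝ))).add ((hasDerivAt_pow 1 u).const_mul (((-14660500/177147):ℝ)))).add ((hasDerivAt_pow 2 u).const_mul (((-5690000/177147):ℝ)))).add ((hasDerivAt_pow 3 u).const_mul (((-10550000/531441):ℝ)))).add ((hasDerivAt_pow 4 u).const_mul (((400000/531441):ℝ)))).add ((hasDerivAt_pow 5 u).const_mul (((-1000000/531441):ℝ))))
    have := (hexp.mul hQ).neg
    refine this.congr_deriv ?_; simp only [Pi.add_apply]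
    ring
  rw [intervalIntegral.integral_eq_sub_of_hasDerivAt key
    ((by fun_prop : Continuous fun u : ℝ => Real.exp (-u) * (((56995295780/8549291367):ℝ) + (-500/27) * u ^ 1 + (20000/729) * u ^ 2 + (-50000/2187) * u ^ 3 + (200000/19683) * u ^ 4 + (-1000000/531441) * u ^ 5)).intervalIntegrable _ _)]
  norm_num
  try ring


lemma ptHigh_A_hi : ∀ u ∈ Set.Icc ((16087/20000):ℝ) (1), Real.exp (-u) / u ≤ Real.exp (-u) * (((56995295780/8549291367):ℝ) + (-500/27) * u ^ 1 + (20000/729) * u ^ 2 + (-50000/2187) * u ^ 3 + (200000/19683) * u ^ 4 + (-1000000/531441) * u ^ 5) := by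
  intro u hu
  have h1 : ((16087/20000):ℝ) ≤ u := hu.1
  have h2 : u ≤ ((1):ℝ) := hu.2
  have hupos : (0:ℝ) < u := by norm_num at h1 ⊢; linarith
  have hE := Real.exp_pos (-u)
  have hxabs : |(u - (9/10))/(9/10)| ≤ (1/9) := by
    rw [abs_le]; constructor <;> [nlinarith; nlinarith]
  have hxn : ((u - (9/10))/(9/10)) ^ 6 ≤ ((1/9):ℝ) ^ 6 := by
    calc ((u - (9/10))/(9/10)) ^ 6 ≤ |((u - (9/10))/(9/10)) ^ 6| := le_abs_self _
      _ = |(u - (9/10))/(9/10)| ^ 6 := abs_pow _ _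
      _ ≤ ((1/9):ℝ) ^ 6 := pow_le_pow_left₀ (abs_nonneg _) hxabs 6
  have hq : 1 / u ≤ (((56995295780/8549291367):ℝ) + (-500/27) * u ^ 1 + (20000/729) * u ^ 2 + (-50000/2187) * u ^ 3 + (200000/19683) * u ^ 4 + (-1000000/531441) * u ^ 5) := by
    rw [div_le_iff₀ hupos]
    nlinarith [hxn, h1]
  calc Real.exp (-u) / u = Real.exp (-u) * (1/u) := by ring
    _ ≤ Real.exp (-u) * (((56995295780/8549291367):ℝ) + (-500/27) * u ^ 1 + (20000/729) * u ^ 2 + (-50000/2187) * u ^ 3 + (200000/19683) * u ^ 4 + (-1000000/531441) * u ^ 5) := mul_le_mul_of_nonneg_left hq hE.le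


lemma intLow_B : ∫ u in ((1):ℝ)..(2), Real.exp (-u) * (((20/3):ℝ) + (-20) * u ^ 1 + (320/9) * u ^ 2 + (-1120/27) * u ^ 3 + (896/27) * u ^ 4 + (-4480/243) * u ^ 5 + (5120/729) * u ^ 6 + (-1280/729) * u ^ 7 + (5120/19683) * u ^ 8 + (-1024/59049) * u ^ 9) =
    Real.exp (-((1):ℝ)) * ((-193608940/59049)) - Real.exp (-((2):ℝ)) * ((-526358048/59049)) := by
  have key : ∀ u ∈ Set.uIcc ((1):ℝ) (2), HasDerivAt
      (fun u : ℝ => -(Real.exp (-u) * (((-2633896/2187):ℝ) + (-2648476/2187) * u ^ 1 + (-1302368/2187) * u ^ 2 + (-1380128/6561) * u ^ 3 + (-276992/6561) * u ^ 4 + (-98944/6561) * u ^ 5 + (11008/19683) * u ^ 6 + (-18176/19683) * u ^ 7 + (2048/19683) * u ^ 8 + (-1024/59049) * u ^ 9)))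
      (Real.exp (-u) * (((20/3):ℝ) + (-20) * u ^ 1 + (320/9) * u ^ 2 + (-1120/27) * u ^ 3 + (896/27) * u ^ 4 + (-4480/243) * u ^ 5 + (5120/729) * u ^ 6 + (-1280/729) * u ^ 7 + (5120/19683) * u ^ 8 + (-1024/59049) * u ^ 9)) u := by
    intro u _
    have hexp : HasDerivAt (fun u : ℝ => Real.exp (-u)) (-Real.exp (-u)) u := by
      simpa [Function.comp_def] using (Real.hasDerivAt_exp (-u)).comp u (hasDerivAt_neg u)
    have hQ := ((((((((((hasDerivAt_const u (((-2633896/2187):ℝ))).add ((hasDerivAt_pow 1 u).const_mul (((-2648476/2187):ℝ)))).add ((hasDerivAt_pow 2 u).const_mul (((-1302368/2187):ℝ)))).add ((hasDerivAt_pow 3 u).const_mul (((-1380128/6561):ℝ)))).add ((hasDerivAt_pow 4 u).const_mul (((-276992/6561):ℝ)))).add ((hasDerivAt_pow 5 u).const_mul (((-98944/6561):ℝ)))).add ((hasDerivAt_pow 6 u).const_mul (((11008/19683):ℝ)))).add ((hasDerivAt_pow 7 u).const_mul (((-18176/19683):ℝ)))).add ((hasDerivAt_pow 8 u).const_mul (((2048/19683):ℝ)))).add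 ((hasDerivAt_pow 9 u).const_mul (((-1024/59049):ℝ))))
    have := (hexp.mul hQ).neg
    refine this.congr_deriv ?_; simp only [Pi.add_apply]
    ring
  rw [intervalIntegral.integral_eq_sub_of_hasDerivAt key
    ((by fun_prop : Continuous fun u : ℝ => Real.exp (-u) * (((20/3):ℝ) + (-20) * u ^ 1 + (320/9) * u ^ 2 + (-1120/27) * u ^ 3 + (896/27) * u ^ 4 + (-4480/243) * u ^ 5 + (5120/729) * u ^ 6 + (-1280/729) * u ^ 7 + (5120/19683) * u ^ 8 + (-1024/59049) * u ^ 9)).intervalIntegrable _ _)]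
  norm_num
  try ring


lemma ptLow_B : ∀ u ∈ Set.Icc ((1):ℝ) (2), Real.exp (-u) * (((20/3):ℝ) + (-20) * u ^ 1 + (320/9) * u ^ 2 + (-1120/27) * u ^ 3 + (896/27) * u ^ 4 + (-4480/243) * u ^ 5 + (5120/729) * u ^ 6 + (-1280/729) * u ^ 7 + (5120/19683) * u ^ 8 + (-1024/59049) * u ^ 9) ≤ Real.exp (-u) / u := by
  intro u hu
  have h1 : ((1):ℝ) ≤ u := hu.1
  have h2 : u ≤ ((2):ℝ) := hu.2
  have hupos : (0:ℝ) < u := by norm_num at h1 ⊢; linarith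
  have hE := Real.exp_pos (-u)
  have hq : (((20/3):ℝ) + (-20) * u ^ 1 + (320/9) * u ^ 2 + (-1120/27) * u ^ 3 + (896/27) * u ^ 4 + (-4480/243) * u ^ 5 + (5120/729) * u ^ 6 + (-1280/729) * u ^ 7 + (5120/19683) * u ^ 8 + (-1024/59049) * u ^ 9) ≤ 1 / u := by
    rw [le_div_iff₀ hupos]
    nlinarith [sq_nonneg (((u - (3/2))/(3/2)) ^ 5), sq_nonneg u]
  calc Real.exp (-u) * (((20/3):ℝ) + (-20) * u ^ 1 + (320/9) * u ^ 2 + (-1120/27) * u ^ 3 + (896/27) * u ^ 4 + (-4480/243) * u ^ 5 + (5120/729) * u ^ 6 + (-1280/729) * u ^ 7 + (5120/19683) * u ^ 8 + (-1024/59049) * u ^ 9) ≤ Real.exp (-u) * (1/u) := by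
        exact mul_le_mul_of_nonneg_left hq hE.le
    _ = Real.exp (-u) / u := by ring


lemma intHigh_B : ∫ u in ((1):ℝ)..(2), Real.exp (-u) * (((393661/59049):ℝ) + (-20) * u ^ 1 + (320/9) * u ^ 2 + (-1120/27) * u ^ 3 + (896/27) * u ^ 4 + (-4480/243) * u ^ 5 + (5120/729) * u ^ 6 + (-1280/729) * u ^ 7 + (5120/19683) * u ^ 8 + (-1024/59049) * u ^ 9) =
    Real.exp (-((1):ℝ)) * ((-64536313/19683)) - Real.exp (-((2):ℝ)) * ((-526358047/59049)) := by
  have key : ∀ u ∈ Set.uIcc ((1):ℝ) (2), HasDerivAt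
      (fun u : ℝ => -(Real.exp (-u) * (((-71115191/59049):ℝ) + (-2648476/2187) * u ^ 1 + (-1302368/2187) * u ^ 2 + (-1380128/6561) * u ^ 3 + (-276992/6561) * u ^ 4 + (-98944/6561) * u ^ 5 + (11008/19683) * u ^ 6 + (-18176/19683) * u ^ 7 + (2048/19683) * u ^ 8 + (-1024/59049) * u ^ 9)))
      (Real.exp (-u) * (((393661/59049):ℝ) + (-20) * u ^ 1 + (320/9) * u ^ 2 + (-1120/27) * u ^ 3 + (896/27) * u ^ 4 + (-4480/243) * u ^ 5 + (5120/729) * u ^ 6 + (-1280/729) * u ^ 7 + (5120/19683) * u ^ 8 + (-1024/59049) * u ^ 9)) u := by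
    intro u _
    have hexp : HasDerivAt (fun u : ℝ => Real.exp (-u)) (-Real.exp (-u)) u := by
      simpa [Function.comp_def] using (Real.hasDerivAt_exp (-u)).comp u (hasDerivAt_neg u)
    have hQ := ((((((((((hasDerivAt_const u (((-71115191/59049):ℝ))).add ((hasDerivAt_pow 1 u).const_mul (((-2648476/2187):ℝ)))).add ((hasDerivAt_pow 2 u).const_mul (((-1302368/2187):ℝ)))).add ((hasDerivAt_pow 3 u).const_mul (((-1380128/6561):ℝ)))).add ((hasDerivAt_pow 4 u).const_mul (((-276992/6561):ℝ)))).add ((hasDerivAt_pow 5 u).const_mul (((-98944/6561):ℝ)))).add ((hasDerivAt_pow 6 u).const_mul (((11008/19683):ℝ)))).add ((hasDerivAt_pow 7 u).const_mul (((-18176/19683):ℝ)))).add ((hasDerivAt_pow 8 u).const_mul (((2048/19683):ℝ)))).add ((hasDerivAt_pow 9 u).const_mul (((-1024/59049):ℝ))))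
    have := (hexp.mul hQ).neg
    refine this.congr_deriv ?_; simp only [Pi.add_apply]
    ring
  rw [intervalIntegral.integral_eq_sub_of_hasDerivAt key
    ((by fun_prop : Continuous fun u : ℝ => Real.exp (-u) * (((393661/59049):ℝ) + (-20) * u ^ 1 + (320/9) * u ^ 2 + (-1120/27) * u ^ 3 + (896/27) * u ^ 4 + (-4480/243) * u ^ 5 + (5120/729) * u ^ 6 + (-1280/729) * u ^ 7 + (5120/19683) * u ^ 8 + (-1024/59049) * u ^ 9)).intervalIntegrable _ _)]
  norm_num
  try ring


lemma ptHigh_B : ∀ u ∈ Set.Icc ((1):ℝ) (2), Real.exp (-u) / u ≤ Real.exp (-u) * (((393661/59049):ℝ) + (-20) * u ^ 1 + (320/9) * u ^ 2 + (-1120/27) * u ^ 3 + (896/27) * u ^ 4 + (-4480/243) * u ^ 5 + (5120/729) * u ^ 6 + (-1280/729) * u ^ 7 + (5120/19683) * u ^ 8 + (-1024/59049) * u ^ 9) := by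
  intro u hu
  have h1 : ((1):ℝ) ≤ u := hu.1
  have h2 : u ≤ ((2):ℝ) := hu.2
  have hupos : (0:ℝ) < u := by norm_num at h1 ⊢; linarith
  have hE := Real.exp_pos (-u)
  have hxabs : |(u - (3/2))/(3/2)| ≤ (1/3) := by
    rw [abs_le]; constructor <;> [nlinarith; nlinarith]
  have hxn : ((u - (3/2))/(3/2)) ^ 10 ≤ ((1/3):ℝ) ^ 10 := by
    calc ((u - (3/2))/(3/2)) ^ 10 ≤ |((u - (3/2))/(3/2)) ^ 10| := le_abs_self _
      _ = |(u - (3/2))/(3/2)| ^ 10 := abs_pow _ _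
      _ ≤ ((1/3):ℝ) ^ 10 := pow_le_pow_left₀ (abs_nonneg _) hxabs 10
  have hq : 1 / u ≤ (((393661/59049):ℝ) + (-20) * u ^ 1 + (320/9) * u ^ 2 + (-1120/27) * u ^ 3 + (896/27) * u ^ 4 + (-4480/243) * u ^ 5 + (5120/729) * u ^ 6 + (-1280/729) * u ^ 7 + (5120/19683) * u ^ 8 + (-1024/59049) * u ^ 9) := by
    rw [div_le_iff₀ hupos]
    nlinarith [hxn, h1]
  calc Real.exp (-u) / u = Real.exp (-u) * (1/u) := by ring
    _ ≤ Real.exp (-u) * (((393661/59049):ℝ) + (-20) * u ^ 1 + (320/9) * u ^ 2 + (-1120/27) * u ^ 3 + (896/27) * u ^ 4 + (-4480/243) * u ^ 5 + (5120/729) * u ^ 6 + (-1280/729) * u ^ 7 + (5120/19683) * u ^ 8 + (-1024/59049) * u ^ 9) := mul_le_mul_of_nonneg_left hq hE.le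


lemma intLow_C : ∫ u in ((2):ℝ)..(4), Real.exp (-u) * (((8/3):ℝ) + (-28/9) * u ^ 1 + (56/27) * u ^ 2 + (-70/81) * u ^ 3 + (56/243) * u ^ 4 + (-28/729) * u ^ 5 + (8/2187) * u ^ 6 + (-1/6561) * u ^ 7) =
    Real.exp (-((2):ℝ)) * ((352/2187)) - Real.exp (-((4):ℝ)) * ((-8360/6561)) := by
  have key : ∀ u ∈ Set.uIcc ((2):ℝ) (4), HasDerivAt
      (fun u : ℝ => -(Real.exp (-u) * (((952/729):ℝ) + (-992/729) * u ^ 1 + (638/729) * u ^ 2 + (-874/2187) * u ^ 3 + (254/2187) * u ^ 4 + (-50/2187) * u ^ 5 + (17/6561) * u ^ 6 + (-1/6561) * u ^ 7)))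
      (Real.exp (-u) * (((8/3):ℝ) + (-28/9) * u ^ 1 + (56/27) * u ^ 2 + (-70/81) * u ^ 3 + (56/243) * u ^ 4 + (-28/729) * u ^ 5 + (8/2187) * u ^ 6 + (-1/6561) * u ^ 7)) u := by
    intro u _
    have hexp : HasDerivAt (fun u : ℝ => Real.exp (-u)) (-Real.exp (-u)) u := by
      simpa [Function.comp_def] using (Real.hasDerivAt_exp (-u)).comp u (hasDerivAt_neg u)
    have hQ := ((((((((hasDerivAt_const u (((952/729):ℝ))).add ((hasDerivAt_pow 1 u).const_mul (((-992/729):ℝ)))).add ((hasDerivAt_pow 2 u).const_mul (((638/729):ℝ)))).add ((hasDerivAt_pow 3 u).const_mul (((-874/2187):ℝ)))).add ((hasDerivAt_pow 4 u).const_mul (((254/2187):ℝ)))).add ((hasDerivAt_pow 5 u).const_mul (((-50/2187):ℝ)))).add ((hasDerivAt_pow 6 u).const_mul (((17/6561):ℝ)))).add ((hasDerivAt_pow 7 u).const_mul (((-1/6561):ℝ))))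
    have := (hexp.mul hQ).neg
    refine this.congr_deriv ?_; simp only [Pi.add_apply]
    ring
  rw [intervalIntegral.integral_eq_sub_of_hasDerivAt key
    ((by fun_prop : Continuous fun u : ℝ => Real.exp (-u) * (((8/3):ℝ) + (-28/9) * u ^ 1 + (56/27) * u ^ 2 + (-70/81) * u ^ 3 + (56/243) * u ^ 4 + (-28/729) * u ^ 5 + (8/2187) * u ^ 6 + (-1/6561) * u ^ 7)).intervalIntegrable _ _)]
  norm_num
  try ring


lemma ptLow_C : ∀ u ∈ Set.Icc ((2):ℝ) (4), Real.exp (-u) * (((8/3):ℝ) + (-28/9) * u ^ 1 + (56/27) * u ^ 2 + (-70/81) * u ^ 3 + (56/243) * u ^ 4 + (-28/729) * u ^ 5 + (8/2187) * u ^ 6 + (-1/6561) * u ^ 7) ≤ Real.exp (-u) / u := by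
  intro u hu
  have h1 : ((2):ℝ) ≤ u := hu.1
  have h2 : u ≤ ((4):ℝ) := hu.2
  have hupos : (0:ℝ) < u := by norm_num at h1 ⊢; linarith
  have hE := Real.exp_pos (-u)
  have hq : (((8/3):ℝ) + (-28/9) * u ^ 1 + (56/27) * u ^ 2 + (-70/81) * u ^ 3 + (56/243) * u ^ 4 + (-28/729) * u ^ 5 + (8/2187) * u ^ 6 + (-1/6561) * u ^ 7) ≤ 1 / u := by
    rw [le_div_iff₀ hupos]
    nlinarith [sq_nonneg (((u - (3))/(3)) ^ 4), sq_nonneg u]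
  calc Real.exp (-u) * (((8/3):ℝ) + (-28/9) * u ^ 1 + (56/27) * u ^ 2 + (-70/81) * u ^ 3 + (56/243) * u ^ 4 + (-28/729) * u ^ 5 + (8/2187) * u ^ 6 + (-1/6561) * u ^ 7) ≤ Real.exp (-u) * (1/u) := by
        exact mul_le_mul_of_nonneg_left hq hE.le
    _ = Real.exp (-u) / u := by ring


lemma intHigh_C : ∫ u in ((2):ℝ)..(4), Real.exp (-u) * (((34993/13122):ℝ) + (-28/9) * u ^ 1 + (56/27) * u ^ 2 + (-70/81) * u ^ 3 + (56/243) * u ^ 4 + (-28/729) * u ^ 5 + (8/2187) * u ^ 6 + (-1/6561) * u ^ 7) =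
    Real.exp (-((2):ℝ)) * ((2113/13122)) - Real.exp (-((4):ℝ)) * ((-5573/4374)) := by
  have key : ∀ u ∈ Set.uIcc ((2):ℝ) (4), HasDerivAt
      (fun u : ℝ => -(Real.exp (-u) * (((17137/13122):ℝ) + (-992/729) * u ^ 1 + (638/729) * u ^ 2 + (-874/2187) * u ^ 3 + (254/2187) * u ^ 4 + (-50/2187) * u ^ 5 + (17/6561) * u ^ 6 + (-1/6561) * u ^ 7)))
      (Real.exp (-u) * (((34993/13122):ℝ) + (-28/9) * u ^ 1 + (56/27) * u ^ 2 + (-70/81) * u ^ 3 + (56/243) * u ^ 4 + (-28/729) * u ^ 5 + (8/2187) * u ^ 6 + (-1/6561) * u ^ 7)) u := by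
    intro u _
    have hexp : HasDerivAt (fun u : ℝ => Real.exp (-u)) (-Real.exp (-u)) u := by
      simpa [Function.comp_def] using (Real.hasDerivAt_exp (-u)).comp u (hasDerivAt_neg u)
    have hQ := ((((((((hasDerivAt_const u (((17137/13122):ℝ))).add ((hasDerivAt_pow 1 u).const_mul (((-992/729):ℝ)))).add ((hasDerivAt_pow 2 u).const_mul (((638/729):ℝ)))).add ((hasDerivAt_pow 3 u).const_mul (((-874/2187):ℝ)))).add ((hasDerivAt_pow 4 u).const_mul (((254/2187):ℝ)))).add ((hasDerivAt_pow 5 u).const_mul (((-50/2187):ℝ)))).add ((hasDerivAt_pow 6 u).const_mul (((17/6561):ℝ)))).add ((hasDerivAt_pow 7 u).const_mul (((-1/6561):ℝ))))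
    have := (hexp.mul hQ).neg
    refine this.congr_deriv ?_; simp only [Pi.add_apply]
    ring
  rw [intervalIntegral.integral_eq_sub_of_hasDerivAt key
    ((by fun_prop : Continuous fun u : ℝ => Real.exp (-u) * (((34993/13122):ℝ) + (-28/9) * u ^ 1 + (56/27) * u ^ 2 + (-70/81) * u ^ 3 + (56/243) * u ^ 4 + (-28/729) * u ^ 5 + (8/2187) * u ^ 6 + (-1/6561) * u ^ 7)).intervalIntegrable _ _)]
  norm_num
  try ring


lemma ptHigh_C : ∀ u ∈ Set.Icc ((2):ℝ) (4), Real.exp (-u) / u ≤ Real.exp (-u) * (((34993/13122):ℝ) + (-28/9) * u ^ 1 + (56/27) * u ^ 2 + (-70/81) * u ^ 3 + (56/243) * u ^ 4 + (-28/729) * u ^ 5 + (8/2187) * u ^ 6 + (-1/6561) * u ^ 7) := by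
  intro u hu
  have h1 : ((2):ℝ) ≤ u := hu.1
  have h2 : u ≤ ((4):ℝ) := hu.2
  have hupos : (0:ℝ) < u := by norm_num at h1 ⊢; linarith
  have hE := Real.exp_pos (-u)
  have hxabs : |(u - (3))/(3)| ≤ (1/3) := by
    rw [abs_le]; constructor <;> [nlinarith; nlinarith]
  have hxn : ((u - (3))/(3)) ^ 8 ≤ ((1/3):ℝ) ^ 8 := by
    calc ((u - (3))/(3)) ^ 8 ≤ |((u - (3))/(3)) ^ 8| := le_abs_self _
      _ = |(u - (3))/(3)| ^ 8 := abs_pow _ _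
      _ ≤ ((1/3):ℝ) ^ 8 := pow_le_pow_left₀ (abs_nonneg _) hxabs 8
  have hq : 1 / u ≤ (((34993/13122):ℝ) + (-28/9) * u ^ 1 + (56/27) * u ^ 2 + (-70/81) * u ^ 3 + (56/243) * u ^ 4 + (-28/729) * u ^ 5 + (8/2187) * u ^ 6 + (-1/6561) * u ^ 7) := by
    rw [div_le_iff₀ hupos]
    nlinarith [hxn, h1]
  calc Real.exp (-u) / u = Real.exp (-u) * (1/u) := by ring
    _ ≤ Real.exp (-u) * (((34993/13122):ℝ) + (-28/9) * u ^ 1 + (56/27) * u ^ 2 + (-70/81) * u ^ 3 + (56/243) * u ^ 4 + (-28/729) * u ^ 5 + (8/2187) * u ^ 6 + (-1/6561) * u ^ 7) := mul_le_mul_of_nonneg_left hq hE.le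


lemma intLow_D : ∫ u in ((4):ℝ)..(8), Real.exp (-u) * (((1):ℝ) + (-5/12) * u ^ 1 + (5/54) * u ^ 2 + (-5/432) * u ^ 3 + (1/1296) * u ^ 4 + (-1/46656) * u ^ 5) =
    Real.exp (-((4):ℝ)) * ((601/2916)) - Real.exp (-((8):ℝ)) * ((301/2916)) := by
  have key : ∀ u ∈ Set.uIcc ((4):ℝ) (8), HasDerivAt
      (fun u : ℝ => -(Real.exp (-u) * (((695/972):ℝ) + (-277/972) * u ^ 1 + (16/243) * u ^ 2 + (-13/1458) * u ^ 3 + (31/46656) * u ^ 4 + (-1/46656) * u ^ 5)))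
      (Real.exp (-u) * (((1):ℝ) + (-5/12) * u ^ 1 + (5/54) * u ^ 2 + (-5/432) * u ^ 3 + (1/1296) * u ^ 4 + (-1/46656) * u ^ 5)) u := by
    intro u _
    have hexp : HasDerivAt (fun u : ℝ => Real.exp (-u)) (-Real.exp (-u)) u := by
      simpa [Function.comp_def] using (Real.hasDerivAt_exp (-u)).comp u (hasDerivAt_neg u)
    have hQ := ((((((hasDerivAt_const u (((695/972):ℝ))).add ((hasDerivAt_pow 1 u).const_mul (((-277/972):ℝ)))).add ((hasDerivAt_pow 2 u).const_mul (((16/243):ℝ)))).add ((hasDerivAt_pow 3 u).const_mul (((-13/1458):ℝ)))).add ((hasDerivAt_pow 4 u).const_mul (((31/46656):ℝ)))).add ((hasDerivAt_pow 5 u).const_mul (((-1/46656):ℝ))))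
    have := (hexp.mul hQ).neg
    refine this.congr_deriv ?_; simp only [Pi.add_apply]
    ring
  rw [intervalIntegral.integral_eq_sub_of_hasDerivAt key
    ((by fun_prop : Continuous fun u : ℝ => Real.exp (-u) * (((1):ℝ) + (-5/12) * u ^ 1 + (5/54) * u ^ 2 + (-5/432) * u ^ 3 + (1/1296) * u ^ 4 + (-1/46656) * u ^ 5)).intervalIntegrable _ _)]
  norm_num
  try ring


lemma ptLow_D : ∀ u ∈ Set.Icc ((4):ℝ) (8), Real.exp (-u) * (((1):ℝ) + (-5/12) * u ^ 1 + (5/54) * u ^ 2 + (-5/432) * u ^ 3 + (1/1296) * u ^ 4 + (-1/46656) * u ^ 5) ≤ Real.exp (-u) / u := by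
  intro u hu
  have h1 : ((4):ℝ) ≤ u := hu.1
  have h2 : u ≤ ((8):ℝ) := hu.2
  have hupos : (0:ℝ) < u := by norm_num at h1 ⊢; linarith
  have hE := Real.exp_pos (-u)
  have hq : (((1):ℝ) + (-5/12) * u ^ 1 + (5/54) * u ^ 2 + (-5/432) * u ^ 3 + (1/1296) * u ^ 4 + (-1/46656) * u ^ 5) ≤ 1 / u := by
    rw [le_div_iff₀ hupos]
    nlinarith [sq_nonneg (((u - (6))/(6)) ^ 3), sq_nonneg u]
  calc Real.exp (-u) * (((1):ℝ) + (-5/12) * u ^ 1 + (5/54) * u ^ 2 + (-5/432) * u ^ 3 + (1/1296) * u ^ 4 + (-1/46656) * u ^ 5) ≤ Real.exp (-u) * (1/u) := by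
        exact mul_le_mul_of_nonneg_left hq hE.le
    _ = Real.exp (-u) / u := by ring


lemma intHigh_D : ∫ u in ((4):ℝ)..(8), Real.exp (-u) * (((2917/2916):ℝ) + (-5/12) * u ^ 1 + (5/54) * u ^ 2 + (-5/432) * u ^ 3 + (1/1296) * u ^ 4 + (-1/46656) * u ^ 5) =
    Real.exp (-((4):ℝ)) * ((301/1458)) - Real.exp (-((8):ℝ)) * ((151/1458)) := by
  have key : ∀ u ∈ Set.uIcc ((4):ℝ) (8), HasDerivAt
      (fun u : ℝ => -(Real.exp (-u) * (((1043/1458):ℝ) + (-277/972) * u ^ 1 + (16/243) * u ^ 2 + (-13/1458) * u ^ 3 + (31/46656) * u ^ 4 + (-1/46656) * u ^ 5)))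
      (Real.exp (-u) * (((2917/2916):ℝ) + (-5/12) * u ^ 1 + (5/54) * u ^ 2 + (-5/432) * u ^ 3 + (1/1296) * u ^ 4 + (-1/46656) * u ^ 5)) u := by
    intro u _
    have hexp : HasDerivAt (fun u : ℝ => Real.exp (-u)) (-Real.exp (-u)) u := by
      simpa [Function.comp_def] using (Real.hasDerivAt_exp (-u)).comp u (hasDerivAt_neg u)
    have hQ := ((((((hasDerivAt_const u (((1043/1458):ℝ))).add ((hasDerivAt_pow 1 u).const_mul (((-277/972):ℝ)))).add ((hasDerivAt_pow 2 u).const_mul (((16/243):ℝ)))).add ((hasDerivAt_pow 3 u).const_mul (((-13/1458):ℝ)))).add ((hasDerivAt_pow 4 u).const_mul (((31/46656):ℝ)))).add ((hasDerivAt_pow 5 u).const_mul (((-1/46656):ℝ))))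
    have := (hexp.mul hQ).neg
    refine this.congr_deriv ?_; simp only [Pi.add_apply]
    ring
  rw [intervalIntegral.integral_eq_sub_of_hasDerivAt key
    ((by fun_prop : Continuous fun u : ℝ => Real.exp (-u) * (((2917/2916):ℝ) + (-5/12) * u ^ 1 + (5/54) * u ^ 2 + (-5/432) * u ^ 3 + (1/1296) * u ^ 4 + (-1/46656) * u ^ 5)).intervalIntegrable _ _)]
  norm_num
  try ring


lemma ptHigh_D : ∀ u ∈ Set.Icc ((4):ℝ) (8), Real.exp (-u) / u ≤ Real.exp (-u) * (((2917/2916):ℝ) + (-5/12) * u ^ 1 + (5/54) * u ^ 2 + (-5/432) * u ^ 3 + (1/1296) * u ^ 4 + (-1/46656) * u ^ 5) := by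
  intro u hu
  have h1 : ((4):ℝ) ≤ u := hu.1
  have h2 : u ≤ ((8):ℝ) := hu.2
  have hupos : (0:ℝ) < u := by norm_num at h1 ⊢; linarith
  have hE := Real.exp_pos (-u)
  have hxabs : |(u - (6))/(6)| ≤ (1/3) := by
    rw [abs_le]; constructor <;> [nlinarith; nlinarith]
  have hxn : ((u - (6))/(6)) ^ 6 ≤ ((1/3):ℝ) ^ 6 := by
    calc ((u - (6))/(6)) ^ 6 ≤ |((u - (6))/(6)) ^ 6| := le_abs_self _
      _ = |(u - (6))/(6)| ^ 6 := abs_pow _ _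
      _ ≤ ((1/3):ℝ) ^ 6 := pow_le_pow_left₀ (abs_nonneg _) hxabs 6
  have hq : 1 / u ≤ (((2917/2916):ℝ) + (-5/12) * u ^ 1 + (5/54) * u ^ 2 + (-5/432) * u ^ 3 + (1/1296) * u ^ 4 + (-1/46656) * u ^ 5) := by
    rw [div_le_iff₀ hupos]
    nlinarith [hxn, h1]
  calc Real.exp (-u) / u = Real.exp (-u) * (1/u) := by ring
    _ ≤ Real.exp (-u) * (((2917/2916):ℝ) + (-5/12) * u ^ 1 + (5/54) * u ^ 2 + (-5/432) * u ^ 3 + (1/1296) * u ^ 4 + (-1/46656) * u ^ 5) := mul_le_mul_of_nonneg_left hq hE.le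


set_option maxHeartbeats 2000000 in
/-- With `c` the unique positive root of `∫₀^c (e^x − 1)/x dx = 1` and
`P* = e^{−c} + (e^c − c − 1)·∫₁^∞ e^{−cx}/x dx`, one has `0.580 < P* < 0.581`. -/
theorem stmt_13 (c : ℝ) (hc : 0 < c)
    (hceq : (∫ x in (0:ℝ)..c, (Real.exp x - 1) / x) = 1)
    (P : ℝ)
    (hP : P = Real.exp (-c) +
      (Real.exp c - c - 1) * ∫ x in Set.Ioi (1:ℝ), Real.exp (-c * x) / x) :
    0.580 < P ∧ P < 0.581 := by
  rw [intervalIntegral.integral_of_le hc.le] at hceq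
  -- upper bound on c
  have hch : c < ((160871/200000):ℝ) := by
    by_contra hcon
    push_neg at hcon
    have h1 : ∫ x in Set.Ioc (0:ℝ) (160871/200000), (Real.exp x - 1) / x
        ≤ ∫ x in Set.Ioc (0:ℝ) c, (Real.exp x - 1) / x := by
      apply setIntegral_mono_set (f_integrableOn hc)
      · filter_upwards [ae_restrict_mem measurableSet_Ioc] with x hx using f_nonnegOn x hx
      · exact (Set.Ioc_subset_Ioc_right hcon).eventuallyLE
    have h2 : ∫ x in (0:ℝ)..(160871/200000), (((1):ℝ) + (1/2) * x ^ 1 + (1/6) * x ^ 2 + (1/24) * x ^ 3 + (1/120) * x ^ 4 + (1/720) * x ^ 5 + (1/5040) * x ^ 6 + (1/40320) * x ^ 7)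
        ≤ ∫ x in Set.Ioc (0:ℝ) (160871/200000), (Real.exp x - 1) / x := by
      rw [intervalIntegral.integral_of_le (by norm_num : (0:ℝ) ≤ (160871/200000))]
      exact setIntegral_mono_on
        ((by fun_prop : Continuous fun x : ℝ => (((1):ℝ) + (1/2) * x ^ 1 + (1/6) * x ^ 2 + (1/24) * x ^ 3 + (1/120) * x ^ 4 + (1/720) * x ^ 5 + (1/5040) * x ^ 6 + (1/40320) * x ^ 7)).integrableOn_Ioc)
        (f_integrableOn (by norm_num)) measurableSet_Ioc ptPl
    rw [intPl] at h2
    rw [hceq] at h1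
    linarith
  -- lower bound on c
  have hcl : ((16087/20000):ℝ) < c := by
    by_contra hcon
    push_neg at hcon
    have h1 : ∫ x in Set.Ioc (0:ℝ) c, (Real.exp x - 1) / x
        ≤ ∫ x in Set.Ioc (0:ℝ) (16087/20000), (Real.exp x - 1) / x := by
      apply setIntegral_mono_set (f_integrableOn (by norm_num : (0:ℝ) < (16087/20000)))
      · filter_upwards [ae_restrict_mem measurableSet_Ioc] with x hx using f_nonnegOn x hx
      · exact (Set.Ioc_subset_Ioc_right hcon).eventuallyLE
    have h2 : ∫ x in Set.Ioc (0:ℝ) (16087/20000), (Real.exp x - 1) / x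
        ≤ ∫ x in (0:ℝ)..(16087/20000), (((1):ℝ) + (1/2) * x ^ 1 + (1/6) * x ^ 2 + (1/24) * x ^ 3 + (1/120) * x ^ 4 + (1/720) * x ^ 5 + (1/5040) * x ^ 6 + (1/40320) * x ^ 7 + (1/326592) * x ^ 8) := by
      rw [intervalIntegral.integral_of_le (by norm_num : (0:ℝ) ≤ (16087/20000))]
      exact setIntegral_mono_on (f_integrableOn (by norm_num)) 
        ((by fun_prop : Continuous fun x : ℝ => (((1):ℝ) + (1/2) * x ^ 1 + (1/6) * x ^ 2 + (1/24) * x ^ 3 + (1/120) * x ^ 4 + (1/720) * x ^ 5 + (1/5040) * x ^ 6 + (1/40320) * x ^ 7 + (1/326592) * x ^ 8)).integrableOn_Ioc)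
        measurableSet_Ioc ptPh
    rw [intPh] at h2
    rw [hceq] at h1
    linarith
  have hc1 : c < 1 := by linarith [hch]; 
  -- substitution
  have hsub : (∫ x in Set.Ioi (1:ℝ), Real.exp (-c * x) / x)
      = ∫ u in Set.Ioi c, Real.exp (-u) / u := by
    have h := integral_comp_mul_left_Ioi (fun u => Real.exp (-u) / u) 1 hc
    rw [mul_one, smul_eq_mul] at h
    have heq : ∀ x : ℝ, Real.exp (-(c * x)) / (c * x) = c⁻¹ * (Real.exp (-c * x) / x) := by
      intro x
      rcases eq_or_ne x 0 with h0 | h0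
      · simp [h0]
      · rw [neg_mul]
        field_simp
        try ring
    simp only [heq] at h
    rw [MeasureTheory.integral_const_mul] at h
    exact mul_left_cancel₀ (inv_ne_zero hc.ne') h
  -- integrability on Ioi c
  have hgIoi : IntegrableOn (fun u : ℝ => Real.exp (-u) / u) (Set.Ioi c) := by
    apply Integrable.mono' ((exp_neg_integrableOn_Ioi c zero_lt_one).div_const ((16087/20000):ℝ))
    · exact ((Real.measurable_exp.comp measurable_neg).div measurable_id).aestronglyMeasurable
    · filter_upwards [ae_restrict_mem measurableSet_Ioi] with u hu
      have hu1 : c < u := hu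
      have hu0 : (0:ℝ) < u := lt_trans hc hu1
      have hnn : 0 ≤ Real.exp (-u) / u := div_nonneg (Real.exp_pos _).le hu0.le
      rw [Real.norm_eq_abs, abs_of_nonneg hnn, neg_one_mul]
      apply div_le_div_of_nonneg_left (Real.exp_pos _).le (by norm_num)
      linarith
  -- split at 8
  have hunion : Set.Ioc c 8 ∪ Set.Ioi (8:ℝ) = Set.Ioi c := Set.Ioc_union_Ioi_eq_Ioi (by linarith)
  have hsplit : (∫ u in Set.Ioi c, Real.exp (-u) / u)
      = (∫ u in Set.Ioc c 8, Real.exp (-u) / u) + ∫ u in Set.Ioi (8:ℝ), Real.exp (-u) / u := by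
    rw [← hunion]
    exact setIntegral_union (Set.Ioc_disjoint_Ioi le_rfl) measurableSet_Ioi
      (hgIoi.mono_set (by rw [← hunion]; exact Set.subset_union_left))
      (hgIoi.mono_set (by rw [← hunion]; exact Set.subset_union_right))
  have hIoc8 : (∫ u in Set.Ioc c 8, Real.exp (-u) / u) = ∫ u in c..8, Real.exp (-u) / u :=
    (intervalIntegral.integral_of_le (by linarith)).symm
  -- adjacent splitting
  have e1 : (∫ u in c..1, Real.exp (-u) / u) + (∫ u in (1:ℝ)..2, Real.exp (-u) / u)
      = ∫ u in c..2, Real.exp (-u) / u :=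
    integral_add_adjacent_intervals (gIntOn hc hc1.le) (gIntOn one_pos (by norm_num))
  have e2 : (∫ u in c..2, Real.exp (-u) / u) + (∫ u in (2:ℝ)..4, Real.exp (-u) / u)
      = ∫ u in c..4, Real.exp (-u) / u :=
    integral_add_adjacent_intervals (gIntOn hc (by linarith)) (gIntOn (by norm_num) (by norm_num))
  have e3 : (∫ u in c..4, Real.exp (-u) / u) + (∫ u in (4:ℝ)..8, Real.exp (-u) / u)
      = ∫ u in c..8, Real.exp (-u) / u :=
    integral_add_adjacent_intervals (gIntOn hc (by linarith)) (gIntOn (by norm_num) (by norm_num))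
  -- bracket ∫_c^1 between ∫_ch^1 and ∫_cl^1
  have ba1 : (∫ u in ((16087/20000):ℝ)..c, Real.exp (-u) / u) + (∫ u in c..1, Real.exp (-u) / u)
      = ∫ u in ((16087/20000):ℝ)..1, Real.exp (-u) / u :=
    integral_add_adjacent_intervals (gIntOn (by norm_num) hcl.le) (gIntOn hc hc1.le)
  have ba2 : (∫ u in c..((160871/200000):ℝ), Real.exp (-u) / u) + (∫ u in ((160871/200000):ℝ)..1, Real.exp (-u) / u)
      = ∫ u in c..1, Real.exp (-u) / u :=
    integral_add_adjacent_intervals (gIntOn hc hch.le) (gIntOn (by norm_num) (by norm_num))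
  have bnn1 : 0 ≤ ∫ u in ((16087/20000):ℝ)..c, Real.exp (-u) / u :=
    intervalIntegral.integral_nonneg hcl.le
      (fun u hu => div_nonneg (Real.exp_pos _).le (by have := hu.1; norm_num at this ⊢; linarith))
  have bnn2 : 0 ≤ ∫ u in c..((160871/200000):ℝ), Real.exp (-u) / u :=
    intervalIntegral.integral_nonneg hch.le
      (fun u hu => div_nonneg (Real.exp_pos _).le (by have := hu.1; linarith))

  have hA_lo_lo : ((887785120723/10000000000000):ℝ) ≤ ∫ u in ((160871/200000):ℝ)..(1), Real.exp (-u) / u := by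
    have h := intervalIntegral.integral_mono_on (by norm_num : ((160871/200000):ℝ) ≤ (1))
      ((by fun_prop : Continuous fun u : ℝ => Real.exp (-u) * (((20/3):ℝ) + (-500/27) * u ^ 1 + (20000/729) * u ^ 2 + (-50000/2187) * u ^ 3 + (200000/19683) * u ^ 4 + (-1000000/531441) * u ^ 5)).intervalIntegrable _ _)
      (gIntOn (by norm_num) (by norm_num)) ptLow_A_lo
    rw [intLow_A_lo] at h
    have l1 := expCh_neg_lo; have l2 := expCh_neg_hi; have l3 := en1_lo; have l4 := en1_hi
    linarith [h, l1, l2, l3, l4]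

  have hA_hi_hi : (∫ u in ((16087/20000):ℝ)..(1), Real.exp (-u) / u) ≤ ((887814934581/10000000000000):ℝ) := by
    have h := intervalIntegral.integral_mono_on (by norm_num : ((16087/20000):ℝ) ≤ (1))
      (gIntOn (by norm_num) (by norm_num))
      ((by fun_prop : Continuous fun u : ℝ => Real.exp (-u) * (((56995295780/8549291367):ℝ) + (-500/27) * u ^ 1 + (20000/729) * u ^ 2 + (-50000/2187) * u ^ 3 + (200000/19683) * u ^ 4 + (-1000000/531441) * u ^ 5)).intervalIntegrable _ _)
      ptHigh_A_hi
    rw [intHigh_A_hi] at h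
    have l1 := expCl_neg_lo; have l2 := expCl_neg_hi; have l3 := en1_lo; have l4 := en1_hi
    linarith [h, l1, l2, l3, l4]

  have hB_lo : ((17048291001/100000000000):ℝ) ≤ ∫ u in ((1):ℝ)..(2), Real.exp (-u) / u := by
    have h := intervalIntegral.integral_mono_on (by norm_num : ((1):ℝ) ≤ (2))
      ((by fun_prop : Continuous fun u : ℝ => Real.exp (-u) * (((20/3):ℝ) + (-20) * u ^ 1 + (320/9) * u ^ 2 + (-1120/27) * u ^ 3 + (896/27) * u ^ 4 + (-4480/243) * u ^ 5 + (5120/729) * u ^ 6 + (-1280/729) * u ^ 7 + (5120/19683) * u ^ 8 + (-1024/59049) * u ^ 9)).intervalIntegrable _ _)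
      (gIntOn (by norm_num) (by norm_num)) ptLow_B
    rw [intLow_B] at h
    have l1 := en1_lo; have l2 := en1_hi; have l3 := en2_lo; have l4 := en2_hi
    linarith [h, l1, l2, l3, l4]

  have hB_hi : (∫ u in ((1):ℝ)..(2), Real.exp (-u) / u) ≤ ((17048724903/100000000000):ℝ) := by
    have h := intervalIntegral.integral_mono_on (by norm_num : ((1):ℝ) ≤ (2))
      (gIntOn (by norm_num) (by norm_num))
      ((by fun_prop : Continuous fun u : ℝ => Real.exp (-u) * (((393661/59049):ℝ) + (-20) * u ^ 1 + (320/9) * u ^ 2 + (-1120/27) * u ^ 3 + (896/27) * u ^ 4 + (-4480/243) * u ^ 5 + (5120/729) * u ^ 6 + (-1280/729) * u ^ 7 + (5120/19683) * u ^ 8 + (-1024/59049) * u ^ 9)).intervalIntegrable _ _)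
      ptHigh_B
    rw [intHigh_B] at h
    have l1 := en1_lo; have l2 := en1_hi; have l3 := en2_lo; have l4 := en2_hi
    linarith [h, l1, l2, l3, l4]

  have hC_lo : ((1410002287/31250000000):ℝ) ≤ ∫ u in ((2):ℝ)..(4), Real.exp (-u) / u := by
    have h := intervalIntegral.integral_mono_on (by norm_num : ((2):ℝ) ≤ (4))
      ((by fun_prop : Continuous fun u : ℝ => Real.exp (-u) * (((8/3):ℝ) + (-28/9) * u ^ 1 + (56/27) * u ^ 2 + (-70/81) * u ^ 3 + (56/243) * u ^ 4 + (-28/729) * u ^ 5 + (8/2187) * u ^ 6 + (-1/6561) * u ^ 7)).intervalIntegrable _ _)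
      (gIntOn (by norm_num) (by norm_num)) ptLow_C
    rw [intLow_C] at h
    have l1 := en2_lo; have l2 := en2_hi; have l3 := en4_lo; have l4 := en4_hi
    linarith [h, l1, l2, l3, l4]

  have hC_hi : (∫ u in ((2):ℝ)..(4), Real.exp (-u) / u) ≤ ((225644955101/5000000000000):ℝ) := by
    have h := intervalIntegral.integral_mono_on (by norm_num : ((2):ℝ) ≤ (4))
      (gIntOn (by norm_num) (by norm_num))
      ((by fun_prop : Continuous fun u : ℝ => Real.exp (-u) * (((34993/13122):ℝ) + (-28/9) * u ^ 1 + (56/27) * u ^ 2 + (-70/81) * u ^ 3 + (56/243) * u ^ 4 + (-28/729) * u ^ 5 + (8/2187) * u ^ 6 + (-1/6561) * u ^ 7)).intervalIntegrable _ _)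
      ptHigh_C
    rw [intHigh_C] at h
    have l1 := en2_lo; have l2 := en2_hi; have l3 := en4_lo; have l4 := en4_hi
    linarith [h, l1, l2, l3, l4]

  have hD_lo : ((18701517007/5000000000000):ℝ) ≤ ∫ u in ((4):ℝ)..(8), Real.exp (-u) / u := by
    have h := intervalIntegral.integral_mono_on (by norm_num : ((4):ℝ) ≤ (8))
      ((by fun_prop : Continuous fun u : ℝ => Real.exp (-u) * (((1):ℝ) + (-5/12) * u ^ 1 + (5/54) * u ^ 2 + (-5/432) * u ^ 3 + (1/1296) * u ^ 4 + (-1/46656) * u ^ 5)).intervalIntegrable _ _)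
      (gIntOn (by norm_num) (by norm_num)) ptLow_D
    rw [intLow_D] at h
    have l1 := en4_lo; have l2 := en4_hi; have l3 := en8_lo; have l4 := en8_hi
    linarith [h, l1, l2, l3, l4]

  have hD_hi : (∫ u in ((4):ℝ)..(8), Real.exp (-u) / u) ≤ ((7492938889/2000000000000):ℝ) := by
    have h := intervalIntegral.integral_mono_on (by norm_num : ((4):ℝ) ≤ (8))
      (gIntOn (by norm_num) (by norm_num))
      ((by fun_prop : Continuous fun u : ℝ => Real.exp (-u) * (((2917/2916):ℝ) + (-5/12) * u ^ 1 + (5/54) * u ^ 2 + (-5/432) * u ^ 3 + (1/1296) * u ^ 4 + (-1/46656) * u ^ 5)).intervalIntegrable _ _)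
      ptHigh_D
    rw [intHigh_D] at h
    have l1 := en4_lo; have l2 := en4_hi; have l3 := en8_lo; have l4 := en8_hi
    linarith [h, l1, l2, l3, l4]

  -- tail bounds
  have hT_lo : 0 ≤ ∫ u in Set.Ioi (8:ℝ), Real.exp (-u) / u :=
    setIntegral_nonneg measurableSet_Ioi
      (fun u hu => div_nonneg (Real.exp_pos _).le (by have : (8:ℝ) < u := hu; linarith))
  have hT_hi : (∫ u in Set.Ioi (8:ℝ), Real.exp (-u) / u) ≤ ((209664143/5000000000000):ℝ) := by
    have h1 : (∫ u in Set.Ioi (8:ℝ), Real.exp (-u) / u)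
        ≤ ∫ u in Set.Ioi (8:ℝ), Real.exp (-u) / 8 := by
      apply setIntegral_mono_on (hgIoi.mono_set (Set.Ioi_subset_Ioi (by linarith)))
        (by simpa [neg_one_mul, IntegrableOn] using (exp_neg_integrableOn_Ioi (8:ℝ) zero_lt_one).div_const 8)
        measurableSet_Ioi
      intro u hu
      exact div_le_div_of_nonneg_left (Real.exp_pos _).le (by norm_num) (le_of_lt hu)
    have h2 : (∫ u in Set.Ioi (8:ℝ), Real.exp (-u) / 8) = Real.exp (-(8:ℝ)) / 8 := by
      rw [MeasureTheory.integral_div, integral_exp_neg_Ioi]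
    rw [h2] at h1
    linarith [h1, en8_hi]
  -- combine to bounds on the improper integral
  have hAc_lo : ((887785120723/10000000000000):ℝ) ≤ ∫ u in c..1, Real.exp (-u) / u := by
    linarith [hA_lo_lo, ba2, bnn2]
  have hAc_hi : (∫ u in c..1, Real.exp (-u) / u) ≤ ((887814934581/10000000000000):ℝ) := by
    linarith [hA_hi_hi, ba1, bnn1]
  have hI_lo : ((3081217986677/10000000000000):ℝ) ≤ ∫ x in Set.Ioi (1:ℝ), Real.exp (-c * x) / x := by
    rw [hsub, hsplit, hIoc8, ← e3, ← e2, ← e1]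
    linarith [hAc_lo, hB_lo, hC_lo, hD_lo, hT_lo]
  have hI_hi : (∫ x in Set.Ioi (1:ℝ), Real.exp (-c * x) / x) ≤ ((1540930678907/5000000000000):ℝ) := by
    rw [hsub, hsplit, hIoc8, ← e3, ← e2, ← e1]
    linarith [hAc_hi, hB_hi, hC_hi, hD_hi, hT_hi]
  -- exp(c) and exp(-c) bounds
  have hec_lo : ((22352431183323/10000000000000):ℝ) ≤ Real.exp c := le_trans expCl_lo (Real.exp_le_exp.2 hcl.le)
  have hec_hi : Real.exp c ≤ ((11176271473709/5000000000000):ℝ) := le_trans (Real.exp_le_exp.2 hch.le) expCh_hi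
  have henc_lo : ((4473763912913/10000000000000):ℝ) ≤ Real.exp (-c) :=
    le_trans expCh_neg_lo (Real.exp_le_exp.2 (by linarith))
  have henc_hi : Real.exp (-c) ≤ ((4473786282121/10000000000000):ℝ) :=
    le_trans (Real.exp_le_exp.2 (by linarith)) expCl_neg_hi
  -- final assembly
  have hcoef_lo : ((4308881183323/10000000000000):ℝ) ≤ Real.exp c - c - 1 := by linarith
  have hcoef_hi : Real.exp c - c - 1 ≤ ((2154521473709/5000000000000):ℝ) := by linarith
  have hIpos : (0:ℝ) ≤ ∫ x in Set.Ioi (1:ℝ), Real.exp (-c * x) / x := by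
    linarith [hI_lo]
  constructor
  · rw [hP]
    have hmul : ((4308881183323/10000000000000):ℝ) * ((3081217986677/10000000000000):ℝ)
        ≤ (Real.exp c - c - 1) * ∫ x in Set.Ioi (1:ℝ), Real.exp (-c * x) / x := by
      nlinarith [hcoef_lo, hI_lo, hIpos]
    linarith [hmul, henc_lo]
  · rw [hP]
    have hmul : (Real.exp c - c - 1) * (∫ x in Set.Ioi (1:ℝ), Real.exp (-c * x) / x)
        ≤ ((2154521473709/5000000000000):ℝ) * ((1540930678907/5000000000000):ℝ) := by
      nlinarith [hcoef_hi, hI_hi, hIpos, hcoef_lo]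
    linarith [hmul, henc_hi]
end

section
/- Let c be the unique positive real number with ∫₀^c (e^x − 1)/x dx = 1. There exists a constant C > 0 such that for all integers n ≥ 2 and all integers i with 1 ≤ i ≤ n − 1, one has exp(−n·c/(n − i + 1)) − exp(−n·c/(n − i)) ≤ C/n. -/
/-- With `c` the unique positive root of `∫₀^c (e^x − 1)/x dx = 1`, there exists
`C > 0` such that for all `n ≥ 2` and `1 ≤ i ≤ n − 1`:
`exp(−nc/(n − i + 1)) − exp(−nc/(n − i)) ≤ C/n`. -/
theorem stmt_14 (c : ℝ) (hc : 0 < c)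
    (hceq : (∫ x in (0:ℝ)..c, (Real.exp x - 1) / x) = 1) :
    ∃ C : ℝ, 0 < C ∧ ∀ n : ℕ, 2 ≤ n → ∀ i : ℕ, 1 ≤ i → i ≤ n - 1 →
      Real.exp (-((n : ℝ) * c) / ((n : ℝ) - (i : ℝ) + 1)) -
        Real.exp (-((n : ℝ) * c) / ((n : ℝ) - (i : ℝ))) ≤ C / (n : ℝ) := by
  refine ⟨8 / c, by positivity, ?_⟩
  intro n hn i hi1 hi2
  have hn0 : (0:ℝ) < n := by
    have : 0 < n := by omega
    exact_mod_cast this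
  set s : ℝ := (n:ℝ) - (i:ℝ) with hs
  have hs1 : 1 ≤ s := by
    have h : (i:ℝ) ≤ ((n - 1 : ℕ) : ℝ) := by exact_mod_cast hi2
    have h2 : ((n - 1 : ℕ) : ℝ) = (n:ℝ) - 1 := by
      have : 1 ≤ n := by omega
      push_cast [Nat.cast_sub this]
      ring
    rw [h2] at h
    simp only [hs]; linarith
  have hs0 : (0:ℝ) < s := by linarith
  have hs10 : (0:ℝ) < s + 1 := by linarith
  set a : ℝ := (n:ℝ) * c with ha
  have ha0 : 0 < a := by positivity
  set x : ℝ := a / (s + 1) with hx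
  set y : ℝ := a / s with hy
  have hx0 : 0 < x := div_pos ha0 hs10
  have hxy : x ≤ y := by
    apply div_le_div_of_nonneg_left (le_of_lt ha0) hs0
    linarith
  have h1 : Real.exp (-x) - Real.exp (-y) ≤ Real.exp (-x) * (y - x) := by
    have hexp : Real.exp (-y) = Real.exp (-x) * Real.exp (-(y - x)) := by
      rw [← Real.exp_add]; ring_nf
    have h2 : 1 - (y - x) ≤ Real.exp (-(y - x)) := by
      have := Real.add_one_le_exp (-(y - x)); linarith
    nlinarith [Real.exp_pos (-x)]
  have h3 : Real.exp (-x) ≤ 4 / x ^ 2 := by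
    have h4 : x / 2 ≤ Real.exp (x / 2) := by
      have := Real.add_one_le_exp (x / 2); linarith
    have h5 : x ^ 2 / 4 ≤ Real.exp x := by
      rw [show x = x / 2 + x / 2 by ring, Real.exp_add]
      nlinarith
    rw [Real.exp_neg, inv_eq_one_div, div_le_div_iff₀ (Real.exp_pos x) (by positivity)]
    nlinarith
  have hyx : y - x = a / (s * (s + 1)) := by
    rw [hy, hx]; field_simp; ring
  have h6 : Real.exp (-x) * (y - x) ≤ 4 / x ^ 2 * (y - x) := by
    apply mul_le_mul_of_nonneg_right h3
    linarith
  have h7 : 4 / x ^ 2 * (y - x) = 4 * (s + 1) / (a * s) := by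
    rw [hyx, hx]; field_simp
  have h8 : 4 * (s + 1) / (a * s) ≤ 8 / a := by
    rw [div_le_div_iff₀ (by positivity) ha0]
    nlinarith
  have h9 : (8:ℝ) / a = 8 / c / n := by
    rw [ha, div_div]; ring_nf
  have goal_eq1 : -((n : ℝ) * c) / ((n : ℝ) - (i : ℝ) + 1) = -x := by
    rw [hx, ha, hs]; ring
  have goal_eq2 : -((n : ℝ) * c) / ((n : ℝ) - (i : ℝ)) = -y := by
    rw [hy, ha, hs]; ring
  rw [goal_eq1, goal_eq2]
  calc Real.exp (-x) - Real.exp (-y) ≤ Real.exp (-x) * (y - x) := h1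
    _ ≤ 4 / x ^ 2 * (y - x) := h6
    _ = 4 * (s + 1) / (a * s) := h7
    _ ≤ 8 / a := h8
    _ = 8 / c / n := h9
end
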